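/- With a_k^{(n)}, b_n, λ_n as defined below, prove that a_{2n}^{(n)} · b_0 + a_{2n-1}^{(n)} · λ_1 = (-a;q)_{2n+1} / (q;q²)_{n+1} for all n ≥ 1. -/
import Mathlib


open Finset

/-- The q-Pochhammer symbol `(x;q)_n = ∏_{i=0}^{n-1} (1 - x qⁱ)`. -/
noncomputable def qPoch {K : Type*} [Field K] (x q : K) (n : ℕ) : K :=
  ∏ i ∈ Finset.range n, (1 - x * q ^ i)

/-- The Gaussian binomial coefficient `[n choose k]_q`. -/
noncomputable def qBinom {K : Type*} [Field K] (q : K) (n k : ℕ) : K :=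
  qPoch q q n / (qPoch q q k * qPoch q q (n - k))

/-- Cigler's moment sequence `P_n(a)`. -/
noncomputable def cigP {K : Type*} [Field K] (a q : K) (n : ℕ) : K :=
  (1 / qPoch q (q ^ 2) ((n + 1) / 2)) * ∑ k ∈ Finset.range (n + 1), qBinom q n k * a ^ k

/-- The recurrence coefficients `λ_n` of Definition 1. -/
noncomputable def cigLam {K : Type*} [Field K] (a q : K) (n : ℕ) : K :=
  if Even n then
    q ^ n * (1 + a) ^ 2 * (1 - q ^ (n - 1)) * (1 - q ^ n) / (1 - q ^ (2 * n - 1)) ^ 2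
  else
    -((a + q ^ n) * (a + q ^ (n - 1)) * (1 + a * q ^ (n - 1)) * (1 + a * q ^ n)) /
      ((1 + a) ^ 2 * (1 - q ^ (2 * n - 1)) ^ 2)

/-- The recurrence coefficients `b_n` of Definition 1 (integer exponents via `zpow`). -/
noncomputable def cigB {K : Type*} [Field K] (a q : K) (n : ℕ) : K :=
  if Even n then
    -(1 - q) / ((1 - q ^ (2 * (n : ℤ) + 1)) * (1 - q ^ (2 * (n : ℤ) - 1)) * (1 + a)) *
      (a * (1 - q ^ (2 * (n : ℤ) - 1)) * (1 - q ^ ((n : ℤ) + 1)) * (1 - q ^ (n : ℤ)) / (1 - q)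
        - q ^ (n : ℤ) * ((1 - q ^ ((n : ℤ) - 1)) / (1 - q)
            + q ^ ((n : ℤ) + 1) * (1 - q ^ (n : ℤ)) / (1 - q)) * (1 + a) ^ 2)
  else
    (1 - q) / ((1 - q ^ (2 * (n : ℤ) + 1)) * (1 - q ^ (2 * (n : ℤ) - 1)) * (1 + a)) *
      (a * (1 - q ^ (2 * (n : ℤ) + 1)) * (1 - q ^ ((n : ℤ) - 1)) * (1 - q ^ (n : ℤ)) / (1 - q)
        - q ^ ((n : ℤ) + 1) * ((1 - q ^ (n : ℤ)) / (1 - q)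
            + q ^ ((n : ℤ) - 2) * (1 - q ^ ((n : ℤ) + 1)) / (1 - q)) * (1 + a) ^ 2)

/-- The even-indexed expansion coefficients `a_{2k}^{(n)}` of Proposition 2. -/
noncomputable def aEven {K : Type*} [Field K] (a q : K) (n k : ℕ) : K :=
  qPoch (-(a * q ^ (2 * (n : ℤ) - 1))) q⁻¹ (2 * k) /
      qPoch (q ^ (4 * (n : ℤ) - 2 * (k : ℤ) - 1)) (q ^ 2)⁻¹ k * qBinom (q ^ 2) n k

/-- The odd-indexed expansion coefficients `a_{2k+1}^{(n)}` of Proposition 2. -/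
noncomputable def aOdd {K : Type*} [Field K] (a q : K) (n k : ℕ) : K :=
  (1 + a) * qPoch (-(a * q ^ (2 * (n : ℤ) - 1))) q⁻¹ (2 * k) /
      qPoch (q ^ (4 * (n : ℤ) - 2 * (k : ℤ) - 1)) (q ^ 2)⁻¹ (k + 1) *
    qBinom (q ^ 2) n (k + 1) * (1 - q ^ (2 * (k + 1)))

section Helpers
variable {K : Type*} [Field K]

lemma qPoch_zero' (x q : K) : qPoch x q 0 = 1 := by simp [qPoch]

lemma qPoch_succ (x q : K) (m : ℕ) : qPoch x q (m + 1) = qPoch x q m * (1 - x * q ^ m) := by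
  simp [qPoch, Finset.prod_range_succ]

lemma qPoch_succ' (x q : K) (m : ℕ) : qPoch x q (m + 1) = (1 - x) * qPoch (x * q) q m := by
  unfold qPoch
  rw [Finset.prod_range_succ']
  rw [pow_zero, mul_one, mul_comm]
  congr 1
  refine Finset.prod_congr rfl fun i _ => ?_
  ring

lemma qPoch_rev (q : K) (hq0 : q ≠ 0) (x : K) (m s : ℕ) :
    qPoch (x * q ^ ((m : ℤ) - 1 + (s : ℤ))) q⁻¹ m = qPoch (x * q ^ s) q m := by
  unfold qPoch
  rw [← Finset.prod_range_reflect]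
  refine Finset.prod_congr rfl fun i hi => ?_
  rw [Finset.mem_range] at hi
  have hcast : ((m - 1 - i : ℕ) : ℤ) = (m : ℤ) - 1 - (i : ℤ) := by omega
  have h1 : (q⁻¹ : K) ^ (m - 1 - i) = q ^ (-((m : ℤ) - 1 - (i : ℤ))) := by
    rw [inv_pow, ← zpow_natCast, ← zpow_neg, hcast]
  have h2 : x * q ^ ((m : ℤ) - 1 + (s : ℤ)) * q⁻¹ ^ (m - 1 - i)
      = x * q ^ s * q ^ i := by
    rw [h1, mul_assoc, ← zpow_add₀ hq0]
    rw [show ((m : ℤ) - 1 + (s : ℤ)) + (-((m : ℤ) - 1 - (i : ℤ))) = (s : ℤ) + (i : ℤ) by ring]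
    rw [zpow_add₀ hq0, zpow_natCast, zpow_natCast, mul_assoc]
  rw [h2]

lemma qPoch_pow_ne_zero (q : K) (hq : ∀ m : ℤ, m ≠ 0 → q ^ m ≠ 1) (r s m : ℕ)
    (hr : r ≠ 0) : qPoch (q ^ r) (q ^ s) m ≠ 0 := by
  unfold qPoch
  refine Finset.prod_ne_zero_iff.2 fun i _ => ?_
  intro h
  have h1 : q ^ ((r + s * i : ℕ) : ℤ) = 1 := by
    rw [zpow_natCast, pow_add, pow_mul]
    linear_combination -h
  exact hq _ (by exact_mod_cast (by omega : (r + s * i : ℕ) ≠ 0)) h1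

lemma zpow_sq (q : K) (e : ℤ) : ((q ^ 2 : K)) ^ e = q ^ (2 * e) := by
  rw [← zpow_natCast q 2, ← zpow_mul]
  norm_num

lemma qBinom_self (q : K) (hq : ∀ m : ℤ, m ≠ 0 → q ^ m ≠ 1) (n : ℕ) :
    qBinom (q ^ 2) n n = 1 := by
  unfold qBinom
  rw [Nat.sub_self, qPoch_zero', mul_one, div_self]
  exact qPoch_pow_ne_zero q hq 2 2 n two_ne_zero

lemma aEven_top (a q : K) (hq0 : q ≠ 0) (hq : ∀ m : ℤ, m ≠ 0 → q ^ m ≠ 1) (n : ℕ) :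
    aEven a q n n = qPoch (-a) q (2 * n) / qPoch q (q ^ 2) n := by
  unfold aEven
  have e1 : -(a * q ^ (2 * (n : ℤ) - 1)) = (-a) * q ^ (((2 * n : ℕ) : ℤ) - 1 + ((0 : ℕ) : ℤ)) := by
    push_cast; ring_nf
  have e2 : (q : K) ^ (4 * (n : ℤ) - 2 * (n : ℤ) - 1)
      = q * (q ^ 2) ^ (((n : ℕ) : ℤ) - 1 + ((0 : ℕ) : ℤ)) := by
    rw [zpow_sq, ← zpow_one_add₀ hq0]
    congr 1
    push_cast; ring
  rw [e1, e2, qPoch_rev q hq0 (-a) (2 * n) 0, qPoch_rev (q ^ 2) (pow_ne_zero 2 hq0) q n 0,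
    qBinom_self q hq, mul_one, pow_zero, pow_zero, mul_one, mul_one]

lemma aOdd_num (a q : K) (hq0 : q ≠ 0) (N : ℕ) :
    qPoch (-(a * q ^ (2 * ((N + 1 : ℕ) : ℤ) - 1))) q⁻¹ (2 * N)
      = qPoch (-(a * q ^ 2)) q (2 * N) := by
  have e1 : -(a * q ^ (2 * ((N + 1 : ℕ) : ℤ) - 1))
      = (-a) * q ^ (((2 * N : ℕ) : ℤ) - 1 + ((2 : ℕ) : ℤ)) := by
    push_cast; ring_nf
  rw [e1, qPoch_rev q hq0 (-a) (2 * N) 2, neg_mul]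

lemma aOdd_den (q : K) (hq0 : q ≠ 0) (N : ℕ) :
    qPoch (q ^ (4 * ((N + 1 : ℕ) : ℤ) - 2 * ((N : ℕ) : ℤ) - 1)) (q ^ 2)⁻¹ (N + 1)
      = qPoch (q ^ 3) (q ^ 2) (N + 1) := by
  have e2 : (q : K) ^ (4 * ((N + 1 : ℕ) : ℤ) - 2 * ((N : ℕ) : ℤ) - 1)
      = (q ^ 3) * (q ^ 2) ^ (((N + 1 : ℕ) : ℤ) - 1 + ((0 : ℕ) : ℤ)) := by
    rw [zpow_sq, show (q : K) ^ 3 = q ^ ((3 : ℕ) : ℤ) from (zpow_natCast q 3).symm,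
      ← zpow_add₀ hq0]
    congr 1
    push_cast; ring
  rw [e2, qPoch_rev (q ^ 2) (pow_ne_zero 2 hq0) (q ^ 3) (N + 1) 0, pow_zero, mul_one]

lemma cigB_zero (a q : K) (hq0 : q ≠ 0) (hq : ∀ m : ℤ, m ≠ 0 → q ^ m ≠ 1)
    (ha : (1 : K) + a ≠ 0) : cigB a q 0 = (1 + a) / (1 - q) := by
  have h1 : (1 : K) - q ≠ 0 := sub_ne_zero.2 (fun h => hq 1 one_ne_zero (by rw [zpow_one, ← h]))
  have h2 : (1 : K) - q⁻¹ ≠ 0 := by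
    refine sub_ne_zero.2 fun h => hq (-1) (by norm_num) ?_
    rw [zpow_neg_one, ← h]
  have h1' : q - 1 ≠ 0 := fun h => h1 (by linear_combination -h)
  have h3 : (1 : K) - q⁻¹ = (q - 1) / q := by field_simp
  simp only [cigB, if_pos Even.zero, Nat.cast_zero]
  norm_num
  rw [h3]
  field_simp
  ring

lemma cigLam_one (a q : K) :
    cigLam a q 1 = -((a + q) * (a + 1) * (1 + a) * (1 + a * q)) / ((1 + a) ^ 2 * (1 - q) ^ 2) := by
  simp only [cigLam]
  norm_num

end Helpers

/-- the odd-moment evaluation `a_{2n}^{(n)} b_0 + a_{2n-1}^{(n)} λ_1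
  = (-a;q)_{2n+1}/(q;q²)_{n+1}`. -/
theorem odd_moment_top {K : Type*} [Field K] (a q : K) (hq0 : q ≠ 0)
    (hq : ∀ m : ℤ, m ≠ 0 → q ^ m ≠ 1) (ha : (1 : K) + a ≠ 0)
    (n : ℕ) (hn : 1 ≤ n) :
    aEven a q n n * cigB a q 0 + aOdd a q n (n - 1) * cigLam a q 1 =
      qPoch (-a) q (2 * n + 1) / qPoch q (q ^ 2) (n + 1) := by
  obtain ⟨N, rfl⟩ : ∃ N, n = N + 1 := ⟨n - 1, by omega⟩
  have h1q : (1 : K) - q ≠ 0 :=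
    sub_ne_zero.2 (fun h => hq 1 one_ne_zero (by rw [zpow_one, ← h]))
  have hP : qPoch q (q ^ 2) (N + 1) ≠ 0 := by
    have := qPoch_pow_ne_zero q hq 1 2 (N + 1) one_ne_zero
    rwa [pow_one] at this
  have hQ : qPoch (q ^ 3) (q ^ 2) (N + 1) ≠ 0 :=
    qPoch_pow_ne_zero q hq 3 2 (N + 1) three_ne_zero
  have hX : (1 : K) - q * (q ^ 2) ^ (N + 1) ≠ 0 := by
    refine sub_ne_zero.2 fun h => hq ((2 * N + 3 : ℕ) : ℤ) (by exact_mod_cast (by omega : (2 * N + 3 : ℕ) ≠ 0)) ?_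
    rw [zpow_natCast]
    rw [show (q:K) ^ (2 * N + 3) = q * (q ^ 2) ^ (N + 1) by ring, ← h]
  rw [cigB_zero a q hq0 hq ha, cigLam_one a q]
  rw [aEven_top a q hq0 hq (N + 1)]
  unfold aOdd
  rw [Nat.add_sub_cancel]
  rw [aOdd_num a q hq0 N, aOdd_den q hq0 N, qBinom_self q hq]
  have hA : qPoch (-a) q (2 * (N + 1)) = (1 + a) * ((1 + a * q) * qPoch (-(a * q ^ 2)) q (2 * N)) := by
    rw [show 2 * (N + 1) = 2 * N + 1 + 1 by ring, qPoch_succ', qPoch_succ',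
      show (-a : K) * q * q = -(a * q ^ 2) by ring,
      show (1 : K) - -a = 1 + a by ring, show (1 : K) - -a * q = 1 + a * q by ring]
  have hA2 : qPoch (-a) q (2 * (N + 1) + 1)
      = qPoch (-a) q (2 * (N + 1)) * (1 - (-a) * q ^ (2 * (N + 1))) := qPoch_succ _ _ _
  have hP2 : qPoch q (q ^ 2) (N + 1 + 1) = (1 - q) * qPoch (q ^ 3) (q ^ 2) (N + 1) := by
    rw [qPoch_succ', show (q : K) * q ^ 2 = q ^ 3 by ring]
  have hrel : qPoch q (q ^ 2) (N + 1 + 1)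
      = qPoch q (q ^ 2) (N + 1) * (1 - q * (q ^ 2) ^ (N + 1)) := qPoch_succ _ _ _
  have hQeq : qPoch (q ^ 3) (q ^ 2) (N + 1)
      = qPoch q (q ^ 2) (N + 1) * (1 - q * (q ^ 2) ^ (N + 1)) / (1 - q) := by
    rw [eq_div_iff h1q]
    linear_combination hrel - hP2
  rw [show ((q : K) ^ 2) ^ (N + 1) = q ^ (2 * (N + 1)) from (pow_mul q 2 (N + 1)).symm]
    at hX hQeq
  rw [hA2, hA, hP2, hQeq]
  clear hA hA2 hP2 hrel hQ hQeq hq hn hq0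
  generalize (q : K) ^ (2 * (N + 1)) = u at hX ⊢
  generalize qPoch q ((q : K) ^ 2) (N + 1) = P at hP ⊢
  generalize qPoch (-(a * q ^ 2)) q (2 * N) = A2 at *
  rw [div_div_eq_mul_div,
    show (1 - q) * (P * (1 - q * u) / (1 - q)) = P * (1 - q * u) from by field_simp]
  have d1 : P * (1 - q) ≠ 0 := mul_ne_zero hP h1q
  have d2 : P * (1 - q * u) * ((1 + a) ^ 2 * (1 - q) ^ 2) ≠ 0 :=
    mul_ne_zero (mul_ne_zero hP hX) (mul_ne_zero (pow_ne_zero 2 ha) (pow_ne_zero 2 h1q))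
  have dF : P * (1 - q * u) ≠ 0 := mul_ne_zero hP hX
  rw [mul_one, div_mul_div_comm, div_mul_eq_mul_div, div_mul_div_comm,
    div_add_div _ _ d1 d2, div_eq_div_iff (mul_ne_zero d1 d2) dF]
  ring
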